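/- Let N ≥ 1 and let S̃_N be the group of bijections of ℤ^N generated by coordinate transpositions and γ₁(z₁, …, z_N) = (−z₁, z₂ − z₁, …, z_N − z₁). Then every orbit of S̃_N on ℤ^N contains exactly one point of the cone C_N^+ = {z ∈ ℤ^N : 0 ≤ z₁ ≤ … ≤ z_N}; consequently the quotient ℤ^N / S̃_N is in bijection with C_N^+. -/

import Mathlib

/-- The map `γ₁(z₁, …, z_N) = (−z₁, z₂ − z₁, …, z_N − z₁)` on `ℤ^N`. -/
def gamma1fun (N : ℕ) (hN : 0 < N) (z : Fin N → ℤ) : Fin N → ℤ :=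
  fun i => if i = ⟨0, hN⟩ then -z ⟨0, hN⟩ else z i - z ⟨0, hN⟩

lemma gamma1fun_involutive (N : ℕ) (hN : 0 < N) :
    Function.Involutive (gamma1fun N hN) := by
  intro z
  funext i
  by_cases h : i = ⟨0, hN⟩ <;> simp [gamma1fun, h]

/-- `γ₁` as a permutation of `ℤ^N`. -/
def gamma1Perm (N : ℕ) (hN : 0 < N) : Equiv.Perm (Fin N → ℤ) :=
  (gamma1fun_involutive N hN).toPerm

/-- The permutation of `ℤ^N` swapping the `i`-th and `j`-th coordinates. -/
def swapPerm (N : ℕ) (i j : Fin N) : Equiv.Perm (Fin N → ℤ) :=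
  (Equiv.swap i j).arrowCongr (Equiv.refl ℤ)

/-- The group `S̃_N` generated by the coordinate transpositions and `γ₁`. -/
def Stilde (N : ℕ) (hN : 0 < N) : Subgroup (Equiv.Perm (Fin N → ℤ)) :=
  Subgroup.closure ({gamma1Perm N hN} ∪ {e | ∃ i j : Fin N, e = swapPerm N i j})

/-- The cone `C_N^+` of lattice points with nonnegative, weakly increasing coordinates. -/
def coneC (N : ℕ) (hN : 0 < N) : Set (Fin N → ℤ) :=
  {z | 0 ≤ z ⟨0, hN⟩ ∧ Monotone z}

/-!
The multiset `{0, z₁, …, z_N}` is preserved by coordinate permutations and is translated by `-z₁`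
under `γ₁`, so up to translation it is an invariant of the orbit. On the cone its minimum is `0`,
which pins the translation down, and a monotone tuple is determined by its multiset of values.
Conversely, sorting `z` and, if its least coordinate is negative, applying `γ₁` and sorting again
lands in the cone.
-/

open MulAction

lemma Subgroup.mem_orbit_perm_iff {α : Type*} (H : Subgroup (Equiv.Perm α)) {a b : α} :
    b ∈ orbit H a ↔ ∃ f ∈ H, f a = b := by
  simp [mem_orbit_iff, Subgroup.smul_def, Equiv.Perm.smul_def]

lemma Setoid.bijective_domRestrict_mk {α : Type*} (r : Setoid α) (S : Set α)
    (h : ∀ a, ∃! b, b ∈ S ∧ r a b) : Function.Bijective (S.domRestrict (Quotient.mk r)) := by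
  constructor
  · rintro ⟨b, hb⟩ ⟨b', hb'⟩ hbb'
    exact Subtype.ext <| (h b).unique ⟨hb, r.refl b⟩ ⟨hb', Quotient.exact hbb'⟩
  · rintro ⟨a⟩
    obtain ⟨b, ⟨hb, hab⟩, -⟩ := h a
    exact ⟨⟨b, hb⟩, Quotient.sound (r.symm hab)⟩

lemma Multiset.eq_zero_of_zero_mem_map_add {α : Type*} [AddCommGroup α] [LinearOrder α]
    [IsOrderedAddMonoid α] {s : Multiset α} {c : α} (hs : ∀ x ∈ s, 0 ≤ x)
    (hsc : ∀ x ∈ s.map (· + c), 0 ≤ x) (h₀ : 0 ∈ s) (h₀c : 0 ∈ s.map (· + c)) : c = 0 := by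
  obtain ⟨x, hx, hxc⟩ := Multiset.mem_map.mp h₀c
  have hc : 0 ≤ 0 + c := hsc _ (Multiset.mem_map_of_mem _ h₀)
  exact le_antisymm (hxc ▸ le_add_of_nonneg_left (hs x hx)) (by simpa using hc)

lemma eq_of_monotone_of_map_univ_eq {α : Type*} [LinearOrder α] {n : ℕ} {f g : Fin n → α}
    (hf : Monotone f) (hg : Monotone g)
    (h : Finset.univ.val.map f = Finset.univ.val.map g) : f = g := by
  rw [Fin.univ_val_map, Fin.univ_val_map, Multiset.coe_eq_coe] at h
  exact List.ofFn_injective <|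
    h.eq_of_sortedLE (List.sortedLE_ofFn_iff.mpr hf) (List.sortedLE_ofFn_iff.mpr hg)

def augmentedMultiset {ι α : Type*} [Fintype ι] [Zero α] (z : ι → α) : Multiset α :=
  0 ::ₘ Finset.univ.val.map z

lemma augmentedMultiset_comp_perm {ι α : Type*} [Fintype ι] [Zero α] (z : ι → α)
    (σ : Equiv.Perm ι) : augmentedMultiset (z ∘ σ) = augmentedMultiset z := by
  rw [augmentedMultiset, augmentedMultiset, ← Multiset.map_map, Multiset.map_univ_val_equiv]

def augTranslationSubgroup (ι α : Type*) [Fintype ι] [AddCommGroup α] :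
    Subgroup (Equiv.Perm (ι → α)) where
  carrier := {f | ∀ z, ∃ c, augmentedMultiset (f z) = (augmentedMultiset z).map (· + c)}
  one_mem' z := ⟨0, by simp⟩
  mul_mem' {f g} hf hg z := by
    obtain ⟨c, hc⟩ := hg z
    obtain ⟨d, hd⟩ := hf (g z)
    refine ⟨c + d, ?_⟩
    simp [Equiv.Perm.mul_apply, hd, hc, Multiset.map_map, add_assoc]
  inv_mem' {f} hf z := by
    obtain ⟨c, hc⟩ := hf (f⁻¹ z)
    rw [Equiv.Perm.coe_inv, Equiv.apply_symm_apply] at hc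
    refine ⟨-c, ?_⟩
    simp [hc, Multiset.map_map]

lemma Fin.mk_zero_le {N : ℕ} (hN : 0 < N) (i : Fin N) : (⟨0, hN⟩ : Fin N) ≤ i :=
  Nat.zero_le _

lemma swapPerm_apply {N : ℕ} (i j : Fin N) (z : Fin N → ℤ) :
    swapPerm N i j z = z ∘ Equiv.swap i j := by
  ext k
  simp [swapPerm]

section

variable {N : ℕ} (hN : 0 < N)

lemma augmentedMultiset_gamma1fun (z : Fin N → ℤ) :
    augmentedMultiset (gamma1fun N hN z) = (augmentedMultiset z).map (· + -z ⟨0, hN⟩) := by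
  obtain ⟨n, rfl⟩ := Nat.exists_eq_add_one_of_ne_zero hN.ne'
  simp [augmentedMultiset, Fin.univ_val_map, List.ofFn_succ, gamma1fun, Fin.succ_ne_zero,
    sub_eq_add_neg, Function.comp_def]
  exact .swap _ _ _

lemma Stilde_le_augTranslationSubgroup : Stilde N hN ≤ augTranslationSubgroup (Fin N) ℤ := by
  rw [Stilde, Subgroup.closure_le]
  rintro _ (rfl | ⟨i, j, rfl⟩) z
  · exact ⟨_, augmentedMultiset_gamma1fun hN z⟩
  · exact ⟨0, by simp [swapPerm_apply, augmentedMultiset_comp_perm]⟩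

lemma gamma1fun_mem_orbit_Stilde (z : Fin N → ℤ) : gamma1fun N hN z ∈ orbit (Stilde N hN) z :=
  (Subgroup.mem_orbit_perm_iff _).2 ⟨gamma1Perm N hN, Subgroup.subset_closure (Or.inl rfl), rfl⟩

lemma comp_perm_mem_orbit_Stilde (σ : Equiv.Perm (Fin N)) (z : Fin N → ℤ) :
    z ∘ σ ∈ orbit (Stilde N hN) z := by
  induction σ using Equiv.Perm.swap_induction_on generalizing z with
  | one => exact mem_orbit_self z
  | swap_mul f x y _ ih =>
    have hswap : z ∘ Equiv.swap x y ∈ orbit (Stilde N hN) z :=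
      (Subgroup.mem_orbit_perm_iff _).2
        ⟨swapPerm N x y, Subgroup.subset_closure (Or.inr ⟨x, y, rfl⟩), swapPerm_apply x y z⟩
    rw [Equiv.Perm.coe_mul, ← Function.comp_assoc, ← orbit_eq_iff.2 hswap]
    exact ih _

lemma zero_le_gamma1fun {z : Fin N → ℤ} (hz : Monotone z) (h₀ : z ⟨0, hN⟩ ≤ 0) (i : Fin N) :
    0 ≤ gamma1fun N hN z i := by
  have := hz (Fin.mk_zero_le hN i)
  unfold gamma1fun
  split_ifs <;> omega

lemma exists_mem_orbit_Stilde_nonneg (z : Fin N → ℤ) :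
    ∃ w ∈ orbit (Stilde N hN) z, ∀ i, 0 ≤ w i := by
  have hsort := comp_perm_mem_orbit_Stilde hN (Tuple.sort z) z
  have hmono := Tuple.monotone_sort z
  by_cases h₀ : 0 ≤ (z ∘ Tuple.sort z) ⟨0, hN⟩
  · exact ⟨_, hsort, fun i => h₀.trans (hmono (Fin.mk_zero_le hN i))⟩
  · exact ⟨_, orbit_eq_iff.2 hsort ▸ gamma1fun_mem_orbit_Stilde hN _,
      zero_le_gamma1fun hN hmono (by omega)⟩

lemma comp_sort_mem_coneC {z : Fin N → ℤ} (hz : ∀ i, 0 ≤ z i) : z ∘ Tuple.sort z ∈ coneC N hN :=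
  ⟨hz _, Tuple.monotone_sort z⟩

lemma exists_mem_coneC_mem_orbit_Stilde (z : Fin N → ℤ) :
    ∃ w ∈ coneC N hN, w ∈ orbit (Stilde N hN) z := by
  obtain ⟨v, hv, hv₀⟩ := exists_mem_orbit_Stilde_nonneg hN z
  exact ⟨_, comp_sort_mem_coneC hN hv₀, orbit_eq_iff.2 hv ▸ comp_perm_mem_orbit_Stilde hN _ v⟩

lemma nonneg_of_mem_augmentedMultiset {w : Fin N → ℤ} (hw : w ∈ coneC N hN) :
    ∀ x ∈ augmentedMultiset w, 0 ≤ x := by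
  simp only [augmentedMultiset, Multiset.mem_cons, Multiset.mem_map]
  rintro x (rfl | ⟨i, -, rfl⟩)
  · exact le_rfl
  · exact hw.1.trans (hw.2 (Fin.mk_zero_le hN i))

lemma eq_of_mem_coneC_of_mem_orbit_Stilde {w w' : Fin N → ℤ} (hw : w ∈ coneC N hN)
    (hw' : w' ∈ coneC N hN) (h : w' ∈ orbit (Stilde N hN) w) : w' = w := by
  obtain ⟨f, hf, rfl⟩ := (Subgroup.mem_orbit_perm_iff _).1 h
  obtain ⟨c, hc⟩ := Stilde_le_augTranslationSubgroup hN hf w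
  obtain rfl : c = 0 := Multiset.eq_zero_of_zero_mem_map_add
    (nonneg_of_mem_augmentedMultiset hN hw) (hc ▸ nonneg_of_mem_augmentedMultiset hN hw')
    (Multiset.mem_cons_self _ _) (hc ▸ Multiset.mem_cons_self _ _)
  simp only [add_zero, Multiset.map_id', augmentedMultiset, Multiset.cons_inj_right] at hc
  exact eq_of_monotone_of_map_univ_eq hw'.2 hw.2 hc

lemma existsUnique_mem_coneC_mem_orbit_Stilde (z : Fin N → ℤ) :
    ∃! w, w ∈ coneC N hN ∧ w ∈ orbit (Stilde N hN) z := by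
  obtain ⟨w, hw, hwz⟩ := exists_mem_coneC_mem_orbit_Stilde hN z
  refine ⟨w, ⟨hw, hwz⟩, fun w' ⟨hw', hw'z⟩ => eq_of_mem_coneC_of_mem_orbit_Stilde hN hw hw' ?_⟩
  rwa [← orbit_eq_iff.2 hwz] at hw'z

end

theorem orbit_meets_cone_unique (N : ℕ) (hN : 1 ≤ N) :
    (∀ z : Fin N → ℤ, ∃! w : Fin N → ℤ,
        w ∈ coneC N hN ∧ ∃ f ∈ Stilde N hN, f z = w) ∧
      Nonempty (Quotient (MulAction.orbitRel (Stilde N hN) (Fin N → ℤ)) ≃ coneC N hN) := by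
  have key : ∀ z, ∃! w, w ∈ coneC N hN ∧ orbitRel (Stilde N hN) (Fin N → ℤ) z w := by
    simpa only [orbitRel_apply, mem_orbit_symm] using existsUnique_mem_coneC_mem_orbit_Stilde hN
  refine ⟨?_, ⟨(Equiv.ofBijective _ (Setoid.bijective_domRestrict_mk _ _ key)).symm⟩⟩
  simpa only [← Subgroup.mem_orbit_perm_iff] using existsUnique_mem_coneC_mem_orbit_Stilde hN
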